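/- Under the hypotheses of the previous setup (M' = -½M² + (κ/2)γ² + a, γ' = -Mγ, κ > 0, γ(0) > 0), the auxiliary function w(t) = κγ(0)γ(t) + (γ(0)/γ(t))(1 + M(t)²) satisfies |w'(t)| ≤ (1+2|a|)w(t), and hence w(t) ≤ w(0)e^{(1+2|a|)t} for all t ∈ [0,T). -/

import Mathlib

open Set

/-!
Along the flow the `κγ²` contributions to `w'` cancel, leaving `w' = (1 + 2a)(γ(0)/γ)M`.
Since `|M| ≤ 1 + M²` and the first summand of `w` is nonnegative, `|w'| ≤ (1 + 2|a|) w`,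
and Gronwall's inequality gives the exponential bound.
-/

theorem abs_le_one_add_sq (x : ℝ) : |x| ≤ 1 + x ^ 2 := by
  nlinarith [sq_nonneg (|x| - 1), sq_abs x]

theorem le_mul_exp_of_abs_deriv_le {f f' : ℝ → ℝ} {K a b : ℝ} (hab : a ≤ b)
    (hf : ∀ s ∈ Icc a b, HasDerivAt f (f' s) s) (hf_nonneg : ∀ s ∈ Icc a b, 0 ≤ f s)
    (bound : ∀ s ∈ Ico a b, |f' s| ≤ K * f s) :
    f b ≤ f a * Real.exp (K * (b - a)) := by
  have hcont : ContinuousOn f (Icc a b) :=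
    fun s hs => (hf s hs).continuousAt.continuousWithinAt
  have hderiv : ∀ s ∈ Ico a b, HasDerivWithinAt f (f' s) (Ici s) s :=
    fun s hs => (hf s (Ico_subset_Icc_self hs)).hasDerivWithinAt
  have hbound : ∀ s ∈ Ico a b, ‖f' s‖ ≤ K * ‖f s‖ + 0 := fun s hs => by
    rw [Real.norm_eq_abs, Real.norm_of_nonneg (hf_nonneg s (Ico_subset_Icc_self hs)), add_zero]
    exact bound s hs
  have hb := norm_le_gronwallBound_of_norm_deriv_right_le hcont hderiv le_rfl hbound b
    (right_mem_Icc.2 hab)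
  rwa [gronwallBound_ε0, Real.norm_of_nonneg (hf_nonneg b (right_mem_Icc.2 hab)),
    Real.norm_of_nonneg (hf_nonneg a (left_mem_Icc.2 hab))] at hb

theorem hasDerivAt_auxiliary_function {κ a c t : ℝ} {M γ : ℝ → ℝ}
    (hM : HasDerivAt M (-(1/2) * (M t)^2 + (κ/2) * (γ t)^2 + a) t)
    (hγ : HasDerivAt γ (-(M t) * γ t) t) (hγt : γ t ≠ 0) :
    HasDerivAt (fun s => κ * c * γ s + (c / γ s) * (1 + (M s)^2))
      ((1 + 2 * a) * (c / γ t) * M t) t := by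
  have h : HasDerivAt (fun s => κ * c * γ s + (c / γ s) * (1 + (M s)^2)) _ t :=
    (hγ.const_mul (κ * c)).add
      (((hasDerivAt_const t c).div hγ hγt).mul ((hasDerivAt_const t 1).add (hM.pow 2)))
  refine h.congr_deriv ?_
  simp only [Pi.div_apply]
  field_simp
  ring

theorem abs_auxiliary_deriv_le (a q m p : ℝ) (hq : 0 ≤ q) (hp : 0 ≤ p) :
    |(1 + 2 * a) * q * m| ≤ (1 + 2 * |a|) * (p + q * (1 + m ^ 2)) := by
  have hcoef : |1 + 2 * a| ≤ 1 + 2 * |a| := by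
    simpa [abs_mul] using abs_add_le (1 : ℝ) (2 * a)
  calc |(1 + 2 * a) * q * m| = |1 + 2 * a| * (q * |m|) := by
        rw [abs_mul, abs_mul, abs_of_nonneg hq, mul_assoc]
    _ ≤ (1 + 2 * |a|) * (q * (1 + m ^ 2)) := by
        gcongr
        exact abs_le_one_add_sq m
    _ ≤ (1 + 2 * |a|) * (p + q * (1 + m ^ 2)) := by
        gcongr
        linarith

/-- For the ODE system `M' = -½M² + (κ/2)γ² + a`, `γ' = -Mγ` with `κ > 0`, `γ(0) > 0`
(hence `γ > 0` throughout), the auxiliary function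
`w(t) = κγ(0)γ(t) + (γ(0)/γ(t))(1 + M(t)²)` satisfies `|w'(t)| ≤ (1 + 2|a|) w(t)` and
hence `w(t) ≤ w(0) e^{(1 + 2|a|)t}` for all `t ∈ [0,T)`. -/
theorem auxiliary_function_gronwall
    (T κ a : ℝ) (M γ : ℝ → ℝ)
    (hκ : 0 < κ) (hγ0 : 0 < γ 0)
    (hM : ∀ t ∈ Set.Ico (0:ℝ) T,
      HasDerivAt M (-(1/2) * (M t)^2 + (κ/2) * (γ t)^2 + a) t)
    (hγ : ∀ t ∈ Set.Ico (0:ℝ) T, HasDerivAt γ (-(M t) * γ t) t)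
    (hγpos : ∀ t ∈ Set.Ico (0:ℝ) T, 0 < γ t) :
    (∀ t ∈ Set.Ico (0:ℝ) T, ∃ d : ℝ,
      HasDerivAt (fun s => κ * γ 0 * γ s + (γ 0 / γ s) * (1 + (M s)^2)) d t ∧
      |d| ≤ (1 + 2 * |a|) * (κ * γ 0 * γ t + (γ 0 / γ t) * (1 + (M t)^2))) ∧
    ∀ t ∈ Set.Ico (0:ℝ) T,
      κ * γ 0 * γ t + (γ 0 / γ t) * (1 + (M t)^2)
        ≤ (κ * γ 0 * γ 0 + (γ 0 / γ 0) * (1 + (M 0)^2)) * Real.exp ((1 + 2 * |a|) * t) := by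
  have hderiv : ∀ t ∈ Ico (0:ℝ) T, HasDerivAt
      (fun s => κ * γ 0 * γ s + (γ 0 / γ s) * (1 + (M s)^2))
      ((1 + 2 * a) * (γ 0 / γ t) * M t) t := fun t ht =>
    hasDerivAt_auxiliary_function (hM t ht) (hγ t ht) (hγpos t ht).ne'
  have hbound : ∀ t ∈ Ico (0:ℝ) T, |(1 + 2 * a) * (γ 0 / γ t) * M t|
      ≤ (1 + 2 * |a|) * (κ * γ 0 * γ t + (γ 0 / γ t) * (1 + (M t)^2)) := fun t ht => by
    have := hγpos t ht
    exact abs_auxiliary_deriv_le a _ _ _ (by positivity) (by positivity)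
  refine ⟨fun t ht => ⟨_, hderiv t ht, hbound t ht⟩, fun t ⟨ht0, htT⟩ => ?_⟩
  have hsub : Icc 0 t ⊆ Ico 0 T := Icc_subset_Ico_right htT
  simpa using le_mul_exp_of_abs_deriv_le ht0 (fun s hs => hderiv s (hsub hs))
    (fun s hs => by have := hγpos s (hsub hs); positivity)
    (fun s hs => hbound s (hsub (Ico_subset_Icc_self hs)))
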